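/- arXiv:2202.00603 — 3 statements merged into one kernel-verified Lean document; each statement's English description precedes it below -/
import Mathlib

section
/- Let 0 < α < 1, t₀ ∈ ℝ, let u : [t₀, ∞) → (0,∞) be continuously differentiable, let g : (0,∞) → ℝ be positive, differentiable, and strictly increasing, let u* > 0, and define Ψ(u) = u − u* − ∫_{u*}^{u} g(u*)/g(s) ds. Then for every t ≥ t₀, the Caputo fractional derivative satisfies ᶜD^α_{t₀}(Ψ∘u)(t) ≤ (1 − g(u*)/g(u(t))) · ᶜD^α_{t₀}u(t). -/
/-- The Caputo fractional derivative of order `α` with base point `t₀`: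
`ᶜD^α_{t₀}f(t) = (1/Γ(1−α)) ∫_{t₀}^{t} f'(x) (t−x)^{−α} dx`. -/
noncomputable def caputoDeriv (α t₀ : ℝ) (f : ℝ → ℝ) (t : ℝ) : ℝ :=
  (1 / Real.Gamma (1 - α)) * ∫ x in t₀..t, deriv f x * (t - x) ^ (-α)

/-- The function `Ψ(u) = u − u* − ∫_{u*}^{u} g(u*)/g(s) ds`. -/
noncomputable def PsiFun (g : ℝ → ℝ) (ustar u : ℝ) : ℝ :=
  u - ustar - ∫ s in ustar..u, g ustar / g s

/-! Ψ is convex on `(0, ∞)` with `Ψ' = 1 - g(u*)/g`, so the estimate is an instance of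
`ᶜD^α(φ ∘ u)(t) ≤ φ'(u t) · ᶜD^α u(t)` for convex `C¹` functions `φ`. Subtracting the tangent line
of `φ` at `u t` reduces this to `∫_{t₀}^{t} F'(x) (t - x)^(-α) dx ≤ 0` for a `C¹` function `F ≥ 0`
with `F t = 0`. Integrating by parts on `[t₀, s]`, the term `-∫ F · ∂ₓ(t - x)^(-α)` is `≤ 0` and
the boundary term is `F s (t - s)^(-α) = O((t - s)^(1 - α))`, which vanishes as `s → t`. -/

open Set Filter Topology MeasureTheory

theorem intervalIntegrable_mul_sub_rpow_neg {α a t : ℝ} {f : ℝ → ℝ} (hα : α < 1)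
    (hf : ContinuousOn f (uIcc a t)) :
    IntervalIntegrable (fun x => f x * (t - x) ^ (-α)) volume a t := by
  have hw : IntervalIntegrable (fun x => (t - x) ^ (-α)) volume a t := by
    simpa using ((intervalIntegral.intervalIntegrable_rpow' (r := -α) (by linarith)).comp_sub_left
      (a := 0) (b := t - a) t).symm
  exact hw.continuousOn_mul hf

theorem integral_deriv_mul_sub_rpow_neg_le {α a s t : ℝ} {F F' : ℝ → ℝ} (hα : 0 ≤ α)
    (has : a ≤ s) (hst : s < t) (hFc : ContinuousOn F (Icc a s))
    (hF : ∀ x ∈ Ioo a s, HasDerivAt F (F' x) x) (hF'c : ContinuousOn F' (Icc a s))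
    (hF0 : ∀ x ∈ Icc a s, 0 ≤ F x) :
    ∫ x in a..s, F' x * (t - x) ^ (-α) ≤ F s * (t - s) ^ (-α) := by
  have hpos : ∀ x ∈ Icc a s, 0 < t - x := fun x hx => by linarith [hx.2]
  have hw : ∀ x ∈ Icc a s,
      HasDerivAt (fun y => (t - y) ^ (-α)) (α * (t - x) ^ (-α - 1)) x := by
    intro x hx
    exact (((hasDerivAt_id' x).const_sub t).rpow_const (Or.inl (hpos x hx).ne')).congr_deriv
      (by ring)
  have hwc : ContinuousOn (fun x => (t - x) ^ (-α)) (Icc a s) :=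
    fun x hx => (hw x hx).continuousAt.continuousWithinAt
  have hw'c : ContinuousOn (fun x => α * (t - x) ^ (-α - 1)) (Icc a s) :=
    continuousOn_const.mul ((continuousOn_const.sub continuousOn_id).rpow_const
      fun x hx => Or.inl (hpos x hx).ne')
  have hF'w : ContinuousOn (fun x => F' x * (t - x) ^ (-α)) (uIcc a s) := by
    rw [uIcc_of_le has]; exact hF'c.mul hwc
  have hFw' : ContinuousOn (fun x => F x * (α * (t - x) ^ (-α - 1))) (uIcc a s) := by
    rw [uIcc_of_le has]; exact hFc.mul hw'c
  have hFTC := intervalIntegral.integral_eq_sub_of_hasDerivAt_of_le has (hFc.mul hwc)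
    (fun x hx => (hF x hx).mul (hw x (Ioo_subset_Icc_self hx)))
    (hF'w.intervalIntegrable.add hFw'.intervalIntegrable)
  rw [intervalIntegral.integral_add hF'w.intervalIntegrable hFw'.intervalIntegrable] at hFTC
  simp only [Pi.mul_apply] at hFTC
  have hFw'_nonneg : 0 ≤ ∫ x in a..s, F x * (α * (t - x) ^ (-α - 1)) :=
    intervalIntegral.integral_nonneg has fun x hx =>
      mul_nonneg (hF0 x hx) (mul_nonneg hα (Real.rpow_nonneg (hpos x hx).le _))
  have hFa : 0 ≤ F a * (t - a) ^ (-α) :=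
    mul_nonneg (hF0 a ⟨le_rfl, has⟩) (Real.rpow_nonneg (hpos a ⟨le_rfl, has⟩).le _)
  linarith

theorem integral_deriv_mul_sub_rpow_neg_nonpos {α a t : ℝ} {F F' : ℝ → ℝ} (hα : 0 ≤ α)
    (hα1 : α < 1) (hat : a ≤ t) (hFc : ContinuousOn F (Icc a t))
    (hF : ∀ x ∈ Ioo a t, HasDerivAt F (F' x) x) (hF'c : ContinuousOn F' (Icc a t))
    (hF0 : ∀ x ∈ Icc a t, 0 ≤ F x) (hFt : F t = 0) :
    ∫ x in a..t, F' x * (t - x) ^ (-α) ≤ 0 := by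
  rcases hat.eq_or_lt with rfl | hat
  · simp
  obtain ⟨C, hC⟩ := isCompact_Icc.exists_bound_of_continuousOn hF'c
  have hlip : ∀ s ∈ Ioo a t, F s ≤ C * (t - s) := by
    intro s hs
    obtain ⟨c, hc, hslope⟩ := exists_hasDerivAt_eq_slope F F' hs.2
      (hFc.mono (Icc_subset_Icc hs.1.le le_rfl)) fun x hx => hF x ⟨hs.1.trans hx.1, hx.2⟩
    rw [hFt, eq_div_iff (sub_pos.2 hs.2).ne'] at hslope
    have hCc : |F' c| ≤ C := hC c ⟨(hs.1.trans hc.1).le, hc.2.le⟩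
    nlinarith [neg_abs_le (F' c), sub_pos.2 hs.2]
  have hbound :
      ∀ s ∈ Ioo a t, ∫ x in a..s, F' x * (t - x) ^ (-α) ≤ C * (t - s) ^ (1 - α) := by
    intro s hs
    have hts : 0 < t - s := sub_pos.2 hs.2
    calc ∫ x in a..s, F' x * (t - x) ^ (-α)
        ≤ F s * (t - s) ^ (-α) :=
          integral_deriv_mul_sub_rpow_neg_le hα hs.1.le hs.2
            (hFc.mono (Icc_subset_Icc le_rfl hs.2.le)) (fun x hx => hF x ⟨hx.1, hx.2.trans hs.2⟩)
            (hF'c.mono (Icc_subset_Icc le_rfl hs.2.le)) fun x hx => hF0 x ⟨hx.1, hx.2.trans hs.2.le⟩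
      _ ≤ C * (t - s) * (t - s) ^ (-α) :=
          mul_le_mul_of_nonneg_right (hlip s hs) (Real.rpow_nonneg hts.le _)
      _ = C * (t - s) ^ (1 - α) := by
          rw [mul_assoc, show 1 - α = 1 + -α by ring, Real.rpow_add hts, Real.rpow_one]
  have hprim : Tendsto (fun s => ∫ x in a..s, F' x * (t - x) ^ (-α)) (𝓝[<] t)
      (𝓝 (∫ x in a..t, F' x * (t - x) ^ (-α))) := by
    have hint := intervalIntegrable_mul_sub_rpow_neg hα1 (by rwa [uIcc_of_le hat.le])
    refine ((intervalIntegral.continuousOn_primitive_interval' hint left_mem_uIcc) t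
      right_mem_uIcc).tendsto.mono_left (nhdsWithin_le_of_mem ?_)
    rw [uIcc_of_le hat.le]
    exact mem_of_superset (Ioo_mem_nhdsLT hat) Ioo_subset_Icc_self
  have hdecay : Tendsto (fun s => C * (t - s) ^ (1 - α)) (𝓝[<] t) (𝓝 0) := by
    have : ContinuousAt (fun s => C * (t - s) ^ (1 - α)) t :=
      continuousAt_const.mul ((continuousAt_const.sub continuousAt_id).rpow_const
        (Or.inr (by linarith)))
    simpa [Real.zero_rpow (by linarith : 1 - α ≠ 0)] using this.tendsto.mono_left nhdsWithin_le_nhds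
  exact le_of_tendsto_of_tendsto hprim hdecay (eventually_of_mem (Ioo_mem_nhdsLT hat) hbound)

theorem MonotoneOn.add_mul_sub_le_of_hasDerivAt {I : Set ℝ} {φ φ' : ℝ → ℝ}
    (hm : MonotoneOn φ' I) (hI : I.OrdConnected) (hφ : ∀ y ∈ I, HasDerivAt φ (φ' y) y)
    {y₀ y : ℝ} (hy₀ : y₀ ∈ I) (hy : y ∈ I) :
    φ y₀ + φ' y₀ * (y - y₀) ≤ φ y := by
  have mvt : ∀ a ∈ I, ∀ b ∈ I, a < b → ∃ c ∈ Ioo a b, c ∈ I ∧ φ b - φ a = φ' c * (b - a) := by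
    intro a ha b hb hab
    have hsub : Icc a b ⊆ I := hI.out ha hb
    obtain ⟨c, hc, hslope⟩ := exists_hasDerivAt_eq_slope φ φ' hab
      (fun x hx => (hφ x (hsub hx)).continuousAt.continuousWithinAt)
      fun x hx => hφ x (hsub (Ioo_subset_Icc_self hx))
    refine ⟨c, hc, hsub (Ioo_subset_Icc_self hc), ?_⟩
    rw [hslope, div_mul_cancel₀ _ (sub_pos.2 hab).ne']
  rcases lt_trichotomy y₀ y with h | rfl | h
  · obtain ⟨c, hc, hcI, hslope⟩ := mvt y₀ hy₀ y hy h
    nlinarith [mul_le_mul_of_nonneg_right (hm hy₀ hcI hc.1.le) (sub_pos.2 h).le]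
  · simp
  · obtain ⟨c, hc, hcI, hslope⟩ := mvt y hy y₀ hy₀ h
    nlinarith [mul_le_mul_of_nonneg_right (hm hcI hy₀ hc.2.le) (sub_pos.2 h).le]

theorem caputoDeriv_eq_of_hasDerivAt {α t₀ t : ℝ} {f f' : ℝ → ℝ} (ht : t₀ ≤ t)
    (hf : ∀ x ∈ Ioo t₀ t, HasDerivAt f (f' x) x) :
    caputoDeriv α t₀ f t = 1 / Real.Gamma (1 - α) * ∫ x in t₀..t, f' x * (t - x) ^ (-α) := by
  simp only [caputoDeriv, intervalIntegral.integral_of_le ht, integral_Ioc_eq_integral_Ioo]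
  congr 1
  exact setIntegral_congr_fun measurableSet_Ioo fun x hx => by rw [(hf x hx).deriv]

theorem caputoDeriv_comp_le_of_monotoneOn {α t₀ t : ℝ} {I : Set ℝ} {φ φ' u : ℝ → ℝ}
    (hα : 0 ≤ α) (hα1 : α < 1) (ht : t₀ ≤ t) (hI : I.OrdConnected)
    (hφ : ∀ y ∈ I, HasDerivAt φ (φ' y) y) (hφ'c : ContinuousOn φ' I) (hφ'm : MonotoneOn φ' I)
    (hu : ContDiffOn ℝ 1 u (Icc t₀ t)) (huI : ∀ x ∈ Icc t₀ t, u x ∈ I) :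
    caputoDeriv α t₀ (fun x => φ (u x)) t ≤ φ' (u t) * caputoDeriv α t₀ u t := by
  rcases ht.eq_or_lt with rfl | ht
  · simp [caputoDeriv]
  set u' := derivWithin u (Icc t₀ t)
  have hu'c : ContinuousOn u' (Icc t₀ t) :=
    hu.continuousOn_derivWithin (uniqueDiffOn_Icc ht) le_rfl
  have hu' : ∀ x ∈ Ioo t₀ t, HasDerivAt u (u' x) x := fun x hx =>
    (hu.differentiableOn one_ne_zero x (Ioo_subset_Icc_self hx)).hasDerivWithinAt.hasDerivAt
      (Icc_mem_nhds hx.1 hx.2)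
  have hφc : ContinuousOn φ I := fun y hy => (hφ y hy).continuousAt.continuousWithinAt
  have hφuc : ContinuousOn (fun x => φ (u x)) (Icc t₀ t) := hφc.comp hu.continuousOn huI
  have hφ'uc : ContinuousOn (fun x => φ' (u x)) (Icc t₀ t) := hφ'c.comp hu.continuousOn huI
  have hut : u t ∈ I := huI t ⟨ht.le, le_rfl⟩
  have hgap : ∫ x in t₀..t, (φ' (u x) - φ' (u t)) * u' x * (t - x) ^ (-α) ≤ 0 := by
    refine integral_deriv_mul_sub_rpow_neg_nonpos
      (F := fun x => φ (u x) - φ (u t) - φ' (u t) * (u x - u t)) hα hα1 ht.le ?_ ?_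
      ((hφ'uc.sub continuousOn_const).mul hu'c) ?_ (by simp)
    · exact (hφuc.sub continuousOn_const).sub
        (continuousOn_const.mul (hu.continuousOn.sub continuousOn_const))
    · intro x hx
      have hφu := (hφ _ (huI x (Ioo_subset_Icc_self hx))).comp x (hu' x hx)
      exact ((hφu.sub_const _).sub (((hu' x hx).sub_const _).const_mul _)).congr_deriv (by ring)
    · intro x hx
      linarith [hφ'm.add_mul_sub_le_of_hasDerivAt hI hφ hut (huI x hx)]
  have hsplit : ∫ x in t₀..t, φ' (u x) * u' x * (t - x) ^ (-α) =
      (∫ x in t₀..t, (φ' (u x) - φ' (u t)) * u' x * (t - x) ^ (-α)) +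
        φ' (u t) * ∫ x in t₀..t, u' x * (t - x) ^ (-α) := by
    rw [← intervalIntegral.integral_const_mul, ← intervalIntegral.integral_add
      (intervalIntegrable_mul_sub_rpow_neg hα1 (by
        rw [uIcc_of_le ht.le]; exact (hφ'uc.sub continuousOn_const).mul hu'c))
      ((intervalIntegrable_mul_sub_rpow_neg hα1 (by rwa [uIcc_of_le ht.le])).const_mul _)]
    congr 1
    ext x
    ring
  rw [caputoDeriv_eq_of_hasDerivAt (f := fun x => φ (u x)) ht.le fun x hx =>
      (hφ _ (huI x (Ioo_subset_Icc_self hx))).comp x (hu' x hx),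
    caputoDeriv_eq_of_hasDerivAt ht.le hu', hsplit, mul_add, mul_left_comm]
  have hΓ : 0 ≤ 1 / Real.Gamma (1 - α) := (one_div_pos.2 (Real.Gamma_pos_of_pos (by linarith))).le
  linarith [mul_nonpos_of_nonneg_of_nonpos hΓ hgap]

theorem hasDerivAt_psiFun {g : ℝ → ℝ} {ustar y : ℝ} (hg : ContinuousOn g (Ioi 0))
    (hg0 : ∀ s ∈ Ioi (0 : ℝ), g s ≠ 0) (hustar : 0 < ustar) (hy : 0 < y) :
    HasDerivAt (PsiFun g ustar) (1 - g ustar / g y) y := by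
  have hq : ContinuousOn (fun s => g ustar / g s) (Ioi 0) := continuousOn_const.div hg hg0
  have hint := intervalIntegral.integral_hasDerivAt_right
    (hq.mono (ordConnected_Ioi.uIcc_subset hustar hy)).intervalIntegrable
    (hq.stronglyMeasurableAtFilter isOpen_Ioi y hy) (hq.continuousAt (Ioi_mem_nhds hy))
  exact ((hasDerivAt_id' y).sub_const ustar).sub hint

/-- For `0 < α < 1`, a positive continuously differentiable function `u` on `[t₀,∞)`,
and `g` positive, differentiable and strictly increasing on `(0,∞)`, `u* > 0`,
the Caputo fractional derivative satisfies
`ᶜD^α_{t₀}(Ψ∘u)(t) ≤ (1 − g(u*)/g(u(t))) ᶜD^α_{t₀}u(t)` for all `t ≥ t₀`. -/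
theorem caputo_psi_estimate (α t₀ : ℝ) (hα : 0 < α) (hα1 : α < 1)
    (u : ℝ → ℝ) (hu_pos : ∀ x ∈ Set.Ici t₀, 0 < u x)
    (hu : ContDiffOn ℝ 1 u (Set.Ici t₀))
    (g : ℝ → ℝ)
    (hg_pos : ∀ s ∈ Set.Ioi (0 : ℝ), 0 < g s)
    (hg_diff : DifferentiableOn ℝ g (Set.Ioi 0))
    (hg_mono : StrictMonoOn g (Set.Ioi 0))
    (ustar : ℝ) (hustar : 0 < ustar) :
    ∀ t : ℝ, t₀ ≤ t →
      caputoDeriv α t₀ (fun x => PsiFun g ustar (u x)) t ≤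
        (1 - g ustar / g (u t)) * caputoDeriv α t₀ u t := by
  intro t ht
  have hg0 : ∀ s ∈ Ioi (0 : ℝ), g s ≠ 0 := fun s hs => (hg_pos s hs).ne'
  have hΨ'm : MonotoneOn (fun y => 1 - g ustar / g y) (Ioi 0) := fun y hy z hz hyz =>
    sub_le_sub_left (div_le_div_of_nonneg_left (hg_pos ustar hustar).le (hg_pos y hy)
      (hg_mono.monotoneOn hy hz hyz)) 1
  exact caputoDeriv_comp_le_of_monotoneOn hα.le hα1 ht ordConnected_Ioi
    (fun y hy => hasDerivAt_psiFun hg_diff.continuousOn hg0 hustar hy)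
    (continuousOn_const.sub (continuousOn_const.div hg_diff.continuousOn hg0)) hΨ'm
    (hu.mono Icc_subset_Ici_self) fun x hx => hu_pos x hx.1
end

section
/- Let 0 < α < 1, B(α) > 0, t₀ ∈ ℝ, let u : [t₀, ∞) → (0,∞) be continuously differentiable, and let u* > 0. Then for every t ≥ t₀, the Caputo–Fabrizio fractional derivative of the Volterra-type function satisfies ᶜᶠD^α_{t₀}[ u(·) − u* − u* ln(u(·)/u*) ](t) ≤ (1 − u*/u(t)) · ᶜᶠD^α_{t₀}u(t). -/
/-!
With `k = α / (1 - α) ≥ 0` the Caputo–Fabrizio derivative at `t` is `C ∫_{t₀}^t f' g` with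
`C ≥ 0` and the positive, nondecreasing kernel `g x = exp (-k (t - x))`. For a convex `V` with
derivative `V'`, the difference `∫ V'(u) u' g - V'(u t) ∫ u' g` equals `∫ D' g` for the Bregman
divergence `D x = V (u x) - V (u t) - V'(u t) (u x - u t)`, which is nonnegative and vanishes at
`t`; integrating by parts, `∫ D' g = -D t₀ g t₀ - ∫ D g' ≤ 0`. The Volterra function
`y ↦ y - u* - u* ln (y / u*)` is convex on `(0, ∞)` with derivative `1 - u* / y`.
-/

/-- The Caputo–Fabrizio fractional derivative of order `α` with base point `t₀`
and normalization constant `B`: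
`ᶜᶠD^α_{t₀}f(t) = (B(2−α)/(2(1−α))) ∫_{t₀}^{t} f'(x) exp(−(α/(1−α))(t−x)) dx`. -/
noncomputable def cfDeriv (B α t₀ : ℝ) (f : ℝ → ℝ) (t : ℝ) : ℝ :=
  (B * (2 - α) / (2 * (1 - α))) * ∫ x in t₀..t,
    deriv f x * Real.exp (-(α / (1 - α)) * (t - x))

open Set MeasureTheory intervalIntegral

lemma ConvexOn.add_mul_sub_le_of_hasDerivAt {S : Set ℝ} {f : ℝ → ℝ} {f' x y : ℝ}
    (hf : ConvexOn ℝ S f) (hx : x ∈ S) (hy : y ∈ S) (hfx : HasDerivAt f f' x) :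
    f x + f' * (y - x) ≤ f y := by
  rcases lt_trichotomy x y with hxy | rfl | hyx
  · have := hf.le_slope_of_hasDerivAt hx hy hxy hfx
    rw [slope_def_field, le_div_iff₀ (sub_pos.2 hxy)] at this
    linarith
  · simp
  · have := hf.slope_le_of_hasDerivAt hy hx hyx hfx
    rw [slope_def_field, div_le_iff₀ (sub_pos.2 hyx)] at this
    linarith

lemma integral_deriv_mul_nonpos {a b : ℝ} {f f' g g' : ℝ → ℝ} (hab : a ≤ b)
    (hf : ContinuousOn f (Icc a b)) (hg : ContinuousOn g (Icc a b))
    (hff' : ∀ x ∈ Ioo a b, HasDerivAt f (f' x) x) (hgg' : ∀ x ∈ Ioo a b, HasDerivAt g (g' x) x)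
    (hf' : IntervalIntegrable f' volume a b) (hg' : IntervalIntegrable g' volume a b)
    (hf_nonneg : ∀ x ∈ Icc a b, 0 ≤ f x) (hfb : f b = 0)
    (hga : 0 ≤ g a) (hg'_nonneg : ∀ x ∈ Ioo a b, 0 ≤ g' x) :
    ∫ x in a..b, f' x * g x ≤ 0 := by
  rw [← uIcc_of_le hab] at hf hg
  have hparts := integral_deriv_mul_eq_sub_of_hasDerivAt hf hg
    (by simpa [hab] using hff') (by simpa [hab] using hgg') hf' hg'
  rw [integral_add (hf'.mul_continuousOn hg) (hg'.continuousOn_mul hf), hfb, zero_mul,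
    zero_sub] at hparts
  have hfg' : 0 ≤ ∫ x in a..b, f x * g' x := by
    rw [integral_of_le hab, integral_Ioc_eq_integral_Ioo]
    exact setIntegral_nonneg measurableSet_Ioo fun x hx ↦
      mul_nonneg (hf_nonneg x (Ioo_subset_Icc_self hx)) (hg'_nonneg x hx)
  nlinarith [hf_nonneg a (left_mem_Icc.2 hab)]

lemma integral_comp_deriv_mul_le {a b : ℝ} {S : Set ℝ} {V V' u u' g g' : ℝ → ℝ} (hab : a ≤ b)
    (hV : ConvexOn ℝ S V) (hVV' : ∀ y ∈ S, HasDerivAt V (V' y) y) (hV' : ContinuousOn V' S)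
    (hu : ContinuousOn u (Icc a b)) (huS : MapsTo u (Icc a b) S)
    (huu' : ∀ x ∈ Ioo a b, HasDerivAt u (u' x) x) (hu' : IntervalIntegrable u' volume a b)
    (hg : ContinuousOn g (Icc a b)) (hgg' : ∀ x ∈ Ioo a b, HasDerivAt g (g' x) x)
    (hg' : IntervalIntegrable g' volume a b) (hga : 0 ≤ g a)
    (hg'_nonneg : ∀ x ∈ Ioo a b, 0 ≤ g' x) :
    ∫ x in a..b, V' (u x) * u' x * g x ≤ V' (u b) * ∫ x in a..b, u' x * g x := by
  have hVu : ContinuousOn (V' ∘ u) (uIcc a b) := by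
    rw [uIcc_of_le hab]; exact hV'.comp hu huS
  have hg_uIcc : ContinuousOn g (uIcc a b) := by rwa [uIcc_of_le hab]
  have hD' : IntervalIntegrable (fun x ↦ (V' (u x) - V' (u b)) * u' x) volume a b :=
    hu'.continuousOn_mul (hVu.sub continuousOn_const)
  have hbregman : ∫ x in a..b, (V' (u x) - V' (u b)) * u' x * g x ≤ 0 := by
    refine integral_deriv_mul_nonpos (f := fun x ↦ V (u x) - V (u b) - V' (u b) * (u x - u b))
      hab ?_ hg (fun x hx ↦ ?_) hgg' hD' hg' (fun x hx ↦ ?_) (by ring) hga hg'_nonneg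
    · have hVc : ContinuousOn V S := fun y hy ↦ (hVV' y hy).continuousAt.continuousWithinAt
      exact ((hVc.comp hu huS).sub continuousOn_const).sub
        (continuousOn_const.mul (hu.sub continuousOn_const))
    · have hx' := Ioo_subset_Icc_self hx
      exact ((((hVV' _ (huS hx')).comp x (huu' x hx)).sub_const (V (u b))).sub
        (((huu' x hx).sub_const (u b)).const_mul (V' (u b)))).congr_deriv (by ring)
    · have := hV.add_mul_sub_le_of_hasDerivAt (huS (right_mem_Icc.2 hab)) (huS hx)
        (hVV' _ (huS (right_mem_Icc.2 hab)))
      linarith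
  have hsplit : ∫ x in a..b, V' (u x) * u' x * g x =
      (∫ x in a..b, (V' (u x) - V' (u b)) * u' x * g x) + V' (u b) * ∫ x in a..b, u' x * g x := by
    rw [← intervalIntegral.integral_const_mul, ← integral_add (hD'.mul_continuousOn hg_uIcc)
      ((hu'.mul_continuousOn hg_uIcc).const_mul _)]
    congr 1 with x
    ring
  linarith

lemma cfDeriv_eq_of_hasDerivAt {B α t₀ t : ℝ} {f f' : ℝ → ℝ} (ht : t₀ ≤ t)
    (hf : ∀ x ∈ Ioo t₀ t, HasDerivAt f (f' x) x) :
    cfDeriv B α t₀ f t = B * (2 - α) / (2 * (1 - α)) *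
      ∫ x in t₀..t, f' x * Real.exp (-(α / (1 - α)) * (t - x)) := by
  rw [cfDeriv, integral_of_le ht, integral_of_le ht, integral_Ioc_eq_integral_Ioo,
    integral_Ioc_eq_integral_Ioo,
    setIntegral_congr_fun measurableSet_Ioo fun x hx ↦ by rw [(hf x hx).deriv]]

theorem cfDeriv_comp_le_of_convexOn {B α t₀ t : ℝ} {S : Set ℝ} {V V' u u' : ℝ → ℝ}
    (hα : 0 ≤ α) (hα1 : α < 1) (hB : 0 ≤ B) (ht : t₀ ≤ t)
    (hV : ConvexOn ℝ S V) (hVV' : ∀ y ∈ S, HasDerivAt V (V' y) y) (hV' : ContinuousOn V' S)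
    (hu : ContinuousOn u (Icc t₀ t)) (huS : MapsTo u (Icc t₀ t) S)
    (huu' : ∀ x ∈ Ioo t₀ t, HasDerivAt u (u' x) x) (hu' : IntervalIntegrable u' volume t₀ t) :
    cfDeriv B α t₀ (V ∘ u) t ≤ V' (u t) * cfDeriv B α t₀ u t := by
  set k := α / (1 - α)
  have hk : 0 ≤ k := div_nonneg hα (by linarith)
  have hkernel : ∀ x, HasDerivAt (fun x ↦ Real.exp (-k * (t - x)))
      (k * Real.exp (-k * (t - x))) x := fun x ↦
    (((hasDerivAt_id' x).const_sub t).const_mul (-k)).exp.congr_deriv (by ring)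
  have hcomp : ∀ x ∈ Ioo t₀ t, HasDerivAt (V ∘ u) (V' (u x) * u' x) x := fun x hx ↦
    (hVV' _ (huS (Ioo_subset_Icc_self hx))).comp x (huu' x hx)
  rw [cfDeriv_eq_of_hasDerivAt ht hcomp, cfDeriv_eq_of_hasDerivAt ht huu', mul_left_comm]
  refine mul_le_mul_of_nonneg_left ?_ (div_nonneg (mul_nonneg hB (by linarith)) (by linarith))
  have hkernel' : Continuous fun x ↦ k * Real.exp (-k * (t - x)) := by fun_prop
  exact integral_comp_deriv_mul_le ht hV hVV' hV' hu huS huu' hu' (by fun_prop)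
    (fun x _ ↦ hkernel x) (hkernel'.intervalIntegrable _ _) (Real.exp_pos _).le
    fun x _ ↦ mul_nonneg hk (Real.exp_pos _).le

noncomputable def volterra (c y : ℝ) : ℝ := y - c - c * Real.log (y / c)

lemma convexOn_volterra {c : ℝ} (hc : 0 < c) : ConvexOn ℝ (Ioi 0) (volterra c) := by
  refine (((convexOn_id (convex_Ioi 0)).add
    (strictConcaveOn_log_Ioi.concaveOn.neg.smul hc.le)).add_const (c * Real.log c - c)).congr ?_
  intro y hy
  simp only [volterra, Real.log_div (ne_of_gt hy) hc.ne', Pi.add_apply, Pi.neg_apply, id,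
    smul_eq_mul]
  ring

lemma hasDerivAt_volterra {c y : ℝ} (hc : 0 < c) (hy : 0 < y) :
    HasDerivAt (volterra c) (1 - c / y) y := by
  have hlog := (((hasDerivAt_id' y).div_const c).log (by positivity)).const_mul c
  exact (((hasDerivAt_id' y).sub_const c).sub hlog).congr_deriv (by field_simp)

/-- For `0 < α < 1`, `B(α) > 0`, a positive continuously differentiable function `u` on
`[t₀,∞)` and `u* > 0`, the Caputo–Fabrizio fractional derivative of the Volterra-type
function satisfies
`ᶜᶠD^α_{t₀}[u − u* − u* ln(u/u*)](t) ≤ (1 − u*/u(t)) ᶜᶠD^α_{t₀}u(t)` for all `t ≥ t₀`. -/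
theorem cf_volterra_estimate (α B t₀ : ℝ) (hα : 0 < α) (hα1 : α < 1) (hB : 0 < B)
    (u : ℝ → ℝ) (hu_pos : ∀ x ∈ Set.Ici t₀, 0 < u x)
    (hu : ContDiffOn ℝ 1 u (Set.Ici t₀))
    (ustar : ℝ) (hustar : 0 < ustar) :
    ∀ t : ℝ, t₀ ≤ t →
      cfDeriv B α t₀ (fun x => u x - ustar - ustar * Real.log (u x / ustar)) t ≤
        (1 - ustar / u t) * cfDeriv B α t₀ u t := by
  intro t ht
  have hu' : ContinuousOn (derivWithin u (Ici t₀)) (Ici t₀) :=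
    hu.continuousOn_derivWithin (uniqueDiffOn_Ici t₀) le_rfl
  have huu' : ∀ x ∈ Ioo t₀ t, HasDerivAt u (derivWithin u (Ici t₀) x) x := fun x hx ↦
    ((hu.differentiableOn one_ne_zero x (le_of_lt hx.1)).hasDerivWithinAt).hasDerivAt
      (Ici_mem_nhds hx.1)
  exact cfDeriv_comp_le_of_convexOn (V := volterra ustar) hα.le hα1 hB.le ht
    (convexOn_volterra hustar) (fun y hy ↦ hasDerivAt_volterra hustar hy)
    (continuousOn_const.sub (continuousOn_const.div continuousOn_id fun y hy ↦ ne_of_gt hy))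
    (hu.continuousOn.mono Icc_subset_Ici_self) (fun x hx ↦ hu_pos x hx.1) huu'
    ((hu'.mono Icc_subset_Ici_self).intervalIntegrable_of_Icc ht)
end

section
/- Let 0 < α < 1 and let Λ, d, σ, γ be positive parameters; set m₁ = σ^α + d^α, m₂ = γ^α + d^α, S₀ = Λ^α/d^α. Let F(S,I) = I·F₁(S,I) satisfy hypotheses (H) with F₁ continuous on (0,∞)×[0,∞) and F₁(S,0) > 0 for S > 0, and set R₀ = (σ^α/(m₁m₂))·F₁(S₀,0). Let S, E, I : [0,∞) → (0,∞) be continuously differentiable solutions of the Caputo fractional system ᶜD^α₀S(t) = Λ^α − d^α S(t) − F(S(t),I(t)), ᶜD^α₀E(t) = F(S(t),I(t)) − m₁E(t), ᶜD^α₀I(t) = σ^α E(t) − m₂ I(t). If R₀ ≤ 1, then the Lyapunov functional V₀(t) = ∫_{S₀}^{S(t)} (F₁(x,0) − F₁(S₀,0))/F₁(x,0) dx + E(t) + (m₁/σ^α) I(t) satisfies ᶜD^α₀V₀(t) ≤ 0 for all t > 0. -/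
open MeasureTheory Set Filter Topology intervalIntegral

lemma mul_sub_le_sub_of_hasDerivAt_of_monotoneOn {G g : ℝ → ℝ} {D : Set ℝ}
    (hD : D.OrdConnected) (hG : ∀ y ∈ D, HasDerivAt G (g y) y) (hg : MonotoneOn g D)
    {x y : ℝ} (hx : x ∈ D) (hy : y ∈ D) :
    g x * (y - x) ≤ G y - G x := by
  have hGc : ∀ {p q}, p ∈ D → q ∈ D → ContinuousOn G (Icc p q) := fun hp hq z hz =>
    (hG z (hD.out hp hq hz)).continuousAt.continuousWithinAt
  rcases lt_trichotomy x y with hxy | rfl | hxy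
  · obtain ⟨c, hc, hcG⟩ := exists_hasDerivAt_eq_slope G g hxy (hGc hx hy)
      fun z hz => hG z (hD.out hx hy (Ioo_subset_Icc_self hz))
    rw [eq_div_iff (sub_ne_zero.2 hxy.ne')] at hcG
    calc g x * (y - x) ≤ g c * (y - x) :=
          mul_le_mul_of_nonneg_right (hg hx (hD.out hx hy (Ioo_subset_Icc_self hc)) hc.1.le)
            (sub_nonneg.2 hxy.le)
      _ = G y - G x := hcG
  · simp
  · obtain ⟨c, hc, hcG⟩ := exists_hasDerivAt_eq_slope G g hxy (hGc hy hx)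
      fun z hz => hG z (hD.out hy hx (Ioo_subset_Icc_self hz))
    rw [eq_div_iff (sub_ne_zero.2 hxy.ne')] at hcG
    calc g x * (y - x) ≤ g c * (y - x) :=
          mul_le_mul_of_nonpos_right (hg (hD.out hy hx (Ioo_subset_Icc_self hc)) hx hc.2.le)
            (sub_nonpos.2 hxy.le)
      _ = G y - G x := by linarith

lemma contDiffOn_one_of_hasDerivAt {G g : ℝ → ℝ} {D : Set ℝ} (hD : IsOpen D)
    (hG : ∀ y ∈ D, HasDerivAt G (g y) y) (hg : ContinuousOn g D) :
    ContDiffOn ℝ 1 G D := by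
  rw [show (1 : WithTop ℕ∞) = 0 + 1 from rfl, contDiffOn_succ_iff_deriv_of_isOpen hD]
  exact ⟨fun y hy => (hG y hy).differentiableAt.differentiableWithinAt, by simp,
    contDiffOn_zero.2 (hg.congr fun y hy => (hG y hy).deriv)⟩

lemma hasDerivAt_integral_of_continuousOn {φ : ℝ → ℝ} {D : Set ℝ} (hD : IsOpen D)
    (hDc : D.OrdConnected) (hφ : ContinuousOn φ D) {c y : ℝ} (hc : c ∈ D) (hy : y ∈ D) :
    HasDerivAt (fun y => ∫ x in c..y, φ x) (φ y) y :=
  integral_hasDerivAt_right ((hφ.mono (hDc.uIcc_subset hc hy)).intervalIntegrable)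
    (hφ.stronglyMeasurableAtFilter hD y hy) (hφ.continuousAt (hD.mem_nhds hy))

lemma MonotoneOn.sub_div_self {f : ℝ → ℝ} {s : Set ℝ} {c : ℝ} (hf : MonotoneOn f s) (hc : 0 ≤ c)
    (hpos : ∀ x ∈ s, 0 < f x) : MonotoneOn (fun x => (f x - c) / f x) s := by
  intro x hx y hy hxy
  have := div_le_div_of_nonneg_left hc (hpos x hx) (hf hx hy hxy)
  simp only [sub_div, div_self (hpos x hx).ne', div_self (hpos y hy).ne']
  linarith

lemma MonotoneOn.mul_sub_nonpos {f : ℝ → ℝ} {s : Set ℝ} {x₀ x : ℝ} (hf : MonotoneOn f s)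
    (hx₀ : x₀ ∈ s) (hx : x ∈ s) (h0 : f x₀ = 0) : f x * (x₀ - x) ≤ 0 := by
  rcases le_total x x₀ with h | h
  · exact mul_nonpos_of_nonpos_of_nonneg (h0 ▸ hf hx hx₀ h) (sub_nonneg.2 h)
  · exact mul_nonpos_of_nonneg_of_nonpos (h0 ▸ hf hx₀ hx h) (sub_nonpos.2 h)

lemma antitoneOn_right_of_deriv_nonpos {F : ℝ → ℝ → ℝ} {s : Set ℝ}
    (hcont : ContinuousOn (fun p : ℝ × ℝ => F p.1 p.2) (s ×ˢ Ici 0))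
    (hdiff : DifferentiableOn ℝ (fun p : ℝ × ℝ => F p.1 p.2) (s ×ˢ Ioi 0))
    (hderiv : ∀ x ∈ s, ∀ y > (0 : ℝ), deriv (fun y => F x y) y ≤ 0) {x : ℝ} (hx : x ∈ s) :
    AntitoneOn (fun y => F x y) (Ici 0) := by
  refine antitoneOn_of_deriv_nonpos (convex_Ici 0)
    (hcont.comp (continuous_const.prodMk continuous_id).continuousOn fun y hy => ⟨hx, hy⟩)
    ?_ ?_ <;> rw [interior_Ici]
  · exact hdiff.comp (differentiable_const _ |>.prodMk differentiable_id).differentiableOn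
      fun y hy => ⟨hx, hy⟩
  · exact hderiv x hx

section Caputo

variable {α a t : ℝ}

lemma caputoDeriv_eq_integral_derivWithin (f : ℝ → ℝ) (hat : a ≤ t) :
    caputoDeriv α a f t =
      (1 / Real.Gamma (1 - α)) * ∫ x in a..t, derivWithin f (Ici a) x * (t - x) ^ (-α) := by
  unfold caputoDeriv
  congr 1
  refine integral_congr_ae (Eventually.of_forall fun x hx => ?_)
  rw [uIoc_of_le hat] at hx
  rw [derivWithin_of_mem_nhds (Ici_mem_nhds hx.1)]

lemma intervalIntegrable_mul_rpow_neg (hα1 : α < 1) (hat : a ≤ t) {h : ℝ → ℝ}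
    (hh : ContinuousOn h (Icc a t)) :
    IntervalIntegrable (fun x => h x * (t - x) ^ (-α)) volume a t := by
  have hk : IntervalIntegrable (fun x : ℝ => (t - x) ^ (-α)) volume a t := by
    simpa using
      (intervalIntegrable_rpow' (a := t - a) (b := 0) (by linarith : -1 < -α)).comp_sub_left t
  exact hk.continuousOn_mul (by rwa [uIcc_of_le hat])

lemma ContDiffOn.intervalIntegrable_derivWithin_mul_rpow_neg {f : ℝ → ℝ}
    (hf : ContDiffOn ℝ 1 f (Ici a)) (hα1 : α < 1) (hat : a ≤ t) :
    IntervalIntegrable (fun x => derivWithin f (Ici a) x * (t - x) ^ (-α)) volume a t :=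
  intervalIntegrable_mul_rpow_neg hα1 hat
    ((hf.continuousOn_derivWithin (uniqueDiffOn_Ici a) le_rfl).mono Icc_subset_Ici_self)

lemma caputoDeriv_add (hα1 : α < 1) (hat : a ≤ t) {f g : ℝ → ℝ}
    (hf : ContDiffOn ℝ 1 f (Ici a)) (hg : ContDiffOn ℝ 1 g (Ici a)) :
    caputoDeriv α a (fun x => f x + g x) t = caputoDeriv α a f t + caputoDeriv α a g t := by
  simp only [caputoDeriv_eq_integral_derivWithin _ hat]
  rw [← mul_add, ← integral_add (hf.intervalIntegrable_derivWithin_mul_rpow_neg hα1 hat)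
    (hg.intervalIntegrable_derivWithin_mul_rpow_neg hα1 hat)]
  congr 1
  refine integral_congr fun x hx => ?_
  have hx' : x ∈ Ici a := ((uIcc_of_le hat).subset hx).1
  rw [derivWithin_fun_add ((hf.differentiableOn one_ne_zero) x hx')
    ((hg.differentiableOn one_ne_zero) x hx'), add_mul]

lemma caputoDeriv_const_mul (c : ℝ) (f : ℝ → ℝ) :
    caputoDeriv α a (fun x => c * f x) t = c * caputoDeriv α a f t := by
  simp only [caputoDeriv, deriv_const_mul_field', mul_assoc, intervalIntegral.integral_const_mul]
  ring

lemma integral_mul_rpow_neg_le (hα : 0 ≤ α) {s : ℝ} (has : a ≤ s) (hst : s < t)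
    {v v' : ℝ → ℝ} (hv : ∀ x ∈ Icc a s, HasDerivWithinAt v (v' x) (Icc a s) x)
    (hv' : ContinuousOn v' (Icc a s)) (hv0 : ∀ x ∈ Icc a s, 0 ≤ v x) :
    ∫ x in a..s, v' x * (t - x) ^ (-α) ≤ v s * (t - s) ^ (-α) := by
  have hpos : ∀ x ∈ Icc a s, 0 < t - x := fun x hx => by linarith [hx.2]
  have hk : ∀ x ∈ Icc a s,
      HasDerivAt (fun x => (t - x) ^ (-α)) (α * (t - x) ^ (-α - 1)) x := fun x hx => by
    have := ((hasDerivAt_id x).const_sub t).rpow_const (p := -α) (Or.inl (hpos x hx).ne')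
    simp only [id] at this
    convert this using 1
    ring
  have hk' : ContinuousOn (fun x => α * (t - x) ^ (-α - 1)) (Icc a s) :=
    continuousOn_const.mul ((continuousOn_const.sub continuousOn_id).rpow_const
      fun x hx => Or.inl (hpos x hx).ne')
  rw [← uIcc_of_le has] at hv hv' hk hk'
  have ibp := integral_mul_deriv_eq_deriv_mul_of_hasDerivWithinAt
    (fun x hx => (hk x hx).hasDerivWithinAt) hv hk'.intervalIntegrable hv'.intervalIntegrable
  have h0 : 0 ≤ (t - a) ^ (-α) * v a :=
    mul_nonneg (Real.rpow_nonneg (by linarith) _) (hv0 a (left_mem_Icc.2 has))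
  have h1 : 0 ≤ ∫ x in a..s, α * (t - x) ^ (-α - 1) * v x :=
    integral_nonneg has fun x hx =>
      mul_nonneg (mul_nonneg hα (Real.rpow_nonneg (hpos x hx).le _)) (hv0 x hx)
  simp only [mul_comm (v' _)]
  linarith

lemma tendsto_mul_rpow_neg_nhdsLT (hα1 : α < 1) {v : ℝ → ℝ} {C : ℝ}
    (hv : ∀ᶠ s in 𝓝[<] t, |v s| ≤ C * (t - s)) :
    Tendsto (fun s => v s * (t - s) ^ (-α)) (𝓝[<] t) (𝓝 0) := by
  have hlim : Tendsto (fun s => C * (t - s) ^ (1 - α)) (𝓝[<] t) (𝓝 0) := by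
    have : ContinuousAt (fun s => C * (t - s) ^ (1 - α)) t :=
      continuousAt_const.mul ((continuousAt_const.sub continuousAt_id).rpow_const
        (Or.inr (by linarith)))
    simpa [Real.zero_rpow (by linarith : (1 : ℝ) - α ≠ 0)] using this.tendsto.mono_left
      nhdsWithin_le_nhds
  refine squeeze_zero_norm' ?_ hlim
  filter_upwards [hv, self_mem_nhdsWithin] with s hs (hst : s < t)
  have hts : 0 < t - s := sub_pos.2 hst
  rw [norm_mul, Real.norm_eq_abs, Real.norm_eq_abs, abs_of_pos (Real.rpow_pos_of_pos hts _)]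
  calc |v s| * (t - s) ^ (-α) ≤ C * (t - s) * (t - s) ^ (-α) := by gcongr
    _ = C * (t - s) ^ (1 - α) := by
      rw [sub_eq_add_neg 1 α, Real.rpow_add hts, Real.rpow_one, mul_assoc]

theorem caputoDeriv_nonpos_of_isMinOn (hα : 0 < α) (hα1 : α < 1) (hat : a < t)
    {w : ℝ → ℝ} (hw : ContDiffOn ℝ 1 w (Ici a)) (hmin : IsMinOn w (Icc a t) t) :
    caputoDeriv α a w t ≤ 0 := by
  set w' := derivWithin w (Ici a)
  have hw'c : ContinuousOn w' (Icc a t) :=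
    (hw.continuousOn_derivWithin (uniqueDiffOn_Ici a) le_rfl).mono Icc_subset_Ici_self
  have hw' : ∀ x ∈ Icc a t, HasDerivWithinAt w (w' x) (Icc a t) x := fun x hx =>
    ((hw.differentiableOn one_ne_zero) x hx.1).hasDerivWithinAt.mono Icc_subset_Ici_self
  obtain ⟨C, hC⟩ := isCompact_Icc.exists_bound_of_continuousOn hw'c
  have hlip : ∀ s ∈ Icc a t, |w s - w t| ≤ C * (t - s) := fun s hs => by
    simpa [Real.norm_eq_abs, abs_sub_comm s t, abs_of_nonneg (sub_nonneg.2 hs.2)] using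
      (convex_Icc a t).norm_image_sub_le_of_norm_hasDerivWithin_le hw' hC
        (right_mem_Icc.2 hat.le) hs
  set P : ℝ → ℝ := fun s => ∫ x in a..s, w' x * (t - x) ^ (-α)
  have hP : Tendsto P (𝓝[<] t) (𝓝 (P t)) := by
    have := continuousOn_primitive_interval'
      (intervalIntegrable_mul_rpow_neg hα1 hat.le hw'c) left_mem_uIcc t right_mem_uIcc
    rw [uIcc_of_le hat.le] at this
    exact (this.mono_of_mem_nhdsWithin (Icc_mem_nhdsLT hat)).tendsto
  have hbound : ∀ᶠ s in 𝓝[<] t, P s ≤ (w s - w t) * (t - s) ^ (-α) := by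
    filter_upwards [Ioo_mem_nhdsLT hat] with s hs
    have hsub : Icc a s ⊆ Icc a t := Icc_subset_Icc_right hs.2.le
    exact integral_mul_rpow_neg_le hα.le hs.1.le hs.2
      (fun x hx => ((hw' x (hsub hx)).mono hsub).sub_const _) (hw'c.mono hsub)
      fun x hx => sub_nonneg.2 (hmin (hsub hx))
  have hlim := tendsto_mul_rpow_neg_nhdsLT hα1
    (eventually_of_mem (Ioo_mem_nhdsLT hat) fun s hs => hlip s (Ioo_subset_Icc_self hs))
  rw [caputoDeriv_eq_integral_derivWithin _ hat.le]
  exact mul_nonpos_of_nonneg_of_nonpos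
    (one_div_nonneg.2 (Real.Gamma_pos_of_pos (by linarith)).le)
    (le_of_tendsto_of_tendsto hP hlim hbound)

theorem caputoDeriv_comp_le_of_monotoneOn_deriv (hα : 0 < α) (hα1 : α < 1) (hat : a < t)
    {u G g : ℝ → ℝ} {D : Set ℝ} (hD : IsOpen D) (hDc : D.OrdConnected)
    (hu : ContDiffOn ℝ 1 u (Ici a)) (huD : MapsTo u (Ici a) D)
    (hG : ∀ y ∈ D, HasDerivAt G (g y) y) (hg : MonotoneOn g D) (hgc : ContinuousOn g D) :
    caputoDeriv α a (G ∘ u) t ≤ g (u t) * caputoDeriv α a u t := by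
  have hGu : ContDiffOn ℝ 1 (G ∘ u) (Ici a) := (contDiffOn_one_of_hasDerivAt hD hG hgc).comp hu huD
  have hcu : ContDiffOn ℝ 1 (fun x => -g (u t) * u x) (Ici a) := contDiffOn_const.mul hu
  have hmin : IsMinOn (fun x => G (u x) + -g (u t) * u x) (Icc a t) t :=
    isMinOn_iff.2 fun x hx => by
      linarith [mul_sub_le_sub_of_hasDerivAt_of_monotoneOn hDc hG hg (huD hat.le) (huD hx.1)]
  have := caputoDeriv_nonpos_of_isMinOn hα hα1 hat (hGu.add hcu) hmin
  rw [caputoDeriv_add hα1 hat.le hGu hcu, caputoDeriv_const_mul] at this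
  linarith

end Caputo

lemma seir_lyapunov_rhs_nonpos {Λα dα σα m₁ m₂ S₀ S E I p q r : ℝ} (hdα : 0 < dα)
    (hσα : 0 < σα) (hm : 0 < m₁ * m₂) (hS₀ : S₀ = Λα / dα) (hp : 0 < p) (hq : 0 ≤ q)
    (hI : 0 ≤ I) (hr : r ≤ p) (hR₀ : σα / (m₁ * m₂) * q ≤ 1)
    (hsign : (p - q) / p * (S₀ - S) ≤ 0) :
    (p - q) / p * (Λα - dα * S - I * r) + (I * r - m₁ * E) + m₁ / σα * (σα * E - m₂ * I)
      ≤ 0 := by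
  have hq' : q * σα ≤ m₁ * m₂ := by
    rw [div_mul_eq_mul_div, div_le_one hm] at hR₀
    linarith
  have hqr : q * r / p ≤ q := by
    rw [div_le_iff₀ hp]
    exact mul_le_mul_of_nonneg_left hr hq
  have hsplit : (p - q) / p * (Λα - dα * S - I * r) + (I * r - m₁ * E)
      + m₁ / σα * (σα * E - m₂ * I)
      = dα * ((p - q) / p * (S₀ - S)) + I * (q * r / p - m₁ * m₂ / σα) := by
    rw [hS₀]
    field_simp
    ring
  have hI_coeff : q * r / p ≤ m₁ * m₂ / σα := hqr.trans ((le_div_iff₀ hσα).2 hq')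
  rw [hsplit]
  exact add_nonpos (mul_nonpos_of_nonneg_of_nonpos hdα.le hsign)
    (mul_nonpos_of_nonneg_of_nonpos hI (sub_nonpos.2 hI_coeff))

theorem seir_dfe_lyapunov_nonpos_general
    (α Λ d σ γ : ℝ) (hα : 0 < α) (hα1 : α < 1)
    (hΛ : 0 < Λ) (hd : 0 < d) (hσ : 0 < σ) (hγ : 0 < γ)
    (m₁ m₂ S₀ : ℝ)
    (hm₁ : m₁ = σ ^ α + d ^ α) (hm₂ : m₂ = γ ^ α + d ^ α) (hS₀ : S₀ = Λ ^ α / d ^ α)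
    (F₁ : ℝ → ℝ → ℝ)
    (hF₁_cont : ContinuousOn (fun p : ℝ × ℝ => F₁ p.1 p.2) (Set.Ioi 0 ×ˢ Set.Ici 0))
    (hF₁_diff : ContDiffOn ℝ 1 (fun p : ℝ × ℝ => F₁ p.1 p.2) (Set.Ioi 0 ×ˢ Set.Ioi 0))
    (hF₁_zero_pos : ∀ S > (0 : ℝ), 0 < F₁ S 0)
    (hF₁_S : ∀ S > (0 : ℝ), ∀ I ≥ (0 : ℝ), 0 < deriv (fun s => F₁ s I) S)
    (hF₁_I : ∀ S > (0 : ℝ), ∀ I ≥ (0 : ℝ), deriv (fun i => F₁ S i) I ≤ 0)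
    (R₀ : ℝ) (hR₀ : R₀ = σ ^ α / (m₁ * m₂) * F₁ S₀ 0)
    (S E I : ℝ → ℝ)
    (hS_pos : ∀ t ∈ Set.Ici (0 : ℝ), 0 < S t)
    (hI_pos : ∀ t ∈ Set.Ici (0 : ℝ), 0 < I t)
    (hS_smooth : ContDiffOn ℝ 1 S (Set.Ici 0))
    (hE_smooth : ContDiffOn ℝ 1 E (Set.Ici 0))
    (hI_smooth : ContDiffOn ℝ 1 I (Set.Ici 0))
    (heqS : ∀ t > (0 : ℝ),
      caputoDeriv α 0 S t = Λ ^ α - d ^ α * S t - I t * F₁ (S t) (I t))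
    (heqE : ∀ t > (0 : ℝ),
      caputoDeriv α 0 E t = I t * F₁ (S t) (I t) - m₁ * E t)
    (heqI : ∀ t > (0 : ℝ),
      caputoDeriv α 0 I t = σ ^ α * E t - m₂ * I t)
    (hR₀_le : R₀ ≤ 1)
    (V₀ : ℝ → ℝ)
    (hV₀ : ∀ t, V₀ t =
      (∫ x in S₀..S t, (F₁ x 0 - F₁ S₀ 0) / F₁ x 0) + E t + (m₁ / σ ^ α) * I t) :
    ∀ t > (0 : ℝ), caputoDeriv α 0 V₀ t ≤ 0 := by
  intro t ht
  have hdα : 0 < d ^ α := Real.rpow_pos_of_pos hd α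
  have hσα : 0 < σ ^ α := Real.rpow_pos_of_pos hσ α
  have hm : 0 < m₁ * m₂ :=
    hm₁ ▸ hm₂ ▸ mul_pos (add_pos hσα hdα) (add_pos (Real.rpow_pos_of_pos hγ α) hdα)
  have hS₀_pos : 0 < S₀ := hS₀ ▸ div_pos (Real.rpow_pos_of_pos hΛ α) hdα
  have hSt : 0 < S t := hS_pos t ht.le
  have hF₀c : ContinuousOn (fun x => F₁ x 0) (Ioi 0) :=
    hF₁_cont.comp (continuous_id.prodMk continuous_const).continuousOn
      fun x hx => ⟨hx, self_mem_Ici⟩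
  have hF₀m : MonotoneOn (fun x => F₁ x 0) (Ioi 0) :=
    (strictMonoOn_of_deriv_pos (convex_Ioi 0) hF₀c (by
      simpa using fun x hx => hF₁_S x hx 0 le_rfl)).monotoneOn
  set φ : ℝ → ℝ := fun x => (F₁ x 0 - F₁ S₀ 0) / F₁ x 0
  have hφc : ContinuousOn φ (Ioi 0) :=
    (hF₀c.sub continuousOn_const).div hF₀c fun x hx => (hF₁_zero_pos x hx).ne'
  have hφm : MonotoneOn φ (Ioi 0) := hF₀m.sub_div_self (hF₁_zero_pos S₀ hS₀_pos).le hF₁_zero_pos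
  have hG : ∀ y ∈ Ioi (0 : ℝ), HasDerivAt (fun y => ∫ x in S₀..y, φ x) (φ y) y := fun _ hy =>
    hasDerivAt_integral_of_continuousOn isOpen_Ioi ordConnected_Ioi hφc hS₀_pos hy
  have hGS : ContDiffOn ℝ 1 (fun x => ∫ y in S₀..S x, φ y) (Ici 0) :=
    (contDiffOn_one_of_hasDerivAt isOpen_Ioi hG hφc).comp hS_smooth hS_pos
  have hV : V₀ = fun x => (∫ y in S₀..S x, φ y) + E x + m₁ / σ ^ α * I x := funext hV₀
  have hFI : F₁ (S t) (I t) ≤ F₁ (S t) 0 :=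
    antitoneOn_right_of_deriv_nonpos hF₁_cont (hF₁_diff.differentiableOn one_ne_zero)
      (fun x hx y hy => hF₁_I x hx y hy.le) hSt self_mem_Ici (hI_pos t ht.le).le
      (hI_pos t ht.le).le
  rw [hV, caputoDeriv_add hα1 ht.le (hGS.add hE_smooth) (contDiffOn_const.mul hI_smooth),
    caputoDeriv_add hα1 ht.le hGS hE_smooth, caputoDeriv_const_mul]
  calc _ ≤ φ (S t) * caputoDeriv α 0 S t + caputoDeriv α 0 E t
        + m₁ / σ ^ α * caputoDeriv α 0 I t := by
        gcongr
        exact caputoDeriv_comp_le_of_monotoneOn_deriv hα hα1 ht isOpen_Ioi ordConnected_Ioi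
          hS_smooth hS_pos hG hφm hφc
    _ ≤ 0 := by
        rw [heqS t ht, heqE t ht, heqI t ht]
        exact seir_lyapunov_rhs_nonpos hdα hσα hm hS₀ (hF₁_zero_pos _ hSt)
          (hF₁_zero_pos _ hS₀_pos).le (hI_pos t ht.le).le hFI (hR₀ ▸ hR₀_le)
          (hφm.mul_sub_nonpos hS₀_pos hSt (by simp [φ]))

/-- For the Caputo fractional SEIR system with general incidence `F(S,I) = I·F₁(S,I)`
satisfying hypotheses (H), if the basic reproduction number satisfies `R₀ ≤ 1` then the
Lyapunov functional
`V₀(t) = ∫_{S₀}^{S(t)} (F₁(x,0) − F₁(S₀,0))/F₁(x,0) dx + E(t) + (m₁/σ^α) I(t)`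
satisfies `ᶜD^α₀V₀(t) ≤ 0` for all `t > 0`. -/
theorem seir_dfe_lyapunov_nonpos
    (α Λ d σ γ : ℝ) (hα : 0 < α) (hα1 : α < 1)
    (hΛ : 0 < Λ) (hd : 0 < d) (hσ : 0 < σ) (hγ : 0 < γ)
    (m₁ m₂ S₀ : ℝ)
    (hm₁ : m₁ = σ ^ α + d ^ α) (hm₂ : m₂ = γ ^ α + d ^ α) (hS₀ : S₀ = Λ ^ α / d ^ α)
    (F₁ : ℝ → ℝ → ℝ)
    (hF₁_cont : ContinuousOn (fun p : ℝ × ℝ => F₁ p.1 p.2) (Set.Ioi 0 ×ˢ Set.Ici 0))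
    (hF₁_diff : ContDiffOn ℝ 1 (fun p : ℝ × ℝ => F₁ p.1 p.2) (Set.Ioi 0 ×ˢ Set.Ioi 0))
    (hF₁_zero_pos : ∀ S > (0 : ℝ), 0 < F₁ S 0)
    (hF₁_pos : ∀ S > (0 : ℝ), ∀ I > (0 : ℝ), 0 < F₁ S I)
    (hF₁_S : ∀ S > (0 : ℝ), ∀ I ≥ (0 : ℝ), 0 < deriv (fun s => F₁ s I) S)
    (hF₁_I : ∀ S > (0 : ℝ), ∀ I ≥ (0 : ℝ), deriv (fun i => F₁ S i) I ≤ 0)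
    (hF_I : ∀ S > (0 : ℝ), ∀ I ≥ (0 : ℝ), 0 ≤ deriv (fun i => i * F₁ S i) I)
    (R₀ : ℝ) (hR₀ : R₀ = σ ^ α / (m₁ * m₂) * F₁ S₀ 0)
    (S E I : ℝ → ℝ)
    (hS_pos : ∀ t ∈ Set.Ici (0 : ℝ), 0 < S t)
    (hE_pos : ∀ t ∈ Set.Ici (0 : ℝ), 0 < E t)
    (hI_pos : ∀ t ∈ Set.Ici (0 : ℝ), 0 < I t)
    (hS_smooth : ContDiffOn ℝ 1 S (Set.Ici 0))
    (hE_smooth : ContDiffOn ℝ 1 E (Set.Ici 0))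
    (hI_smooth : ContDiffOn ℝ 1 I (Set.Ici 0))
    (heqS : ∀ t > (0 : ℝ),
      caputoDeriv α 0 S t = Λ ^ α - d ^ α * S t - I t * F₁ (S t) (I t))
    (heqE : ∀ t > (0 : ℝ),
      caputoDeriv α 0 E t = I t * F₁ (S t) (I t) - m₁ * E t)
    (heqI : ∀ t > (0 : ℝ),
      caputoDeriv α 0 I t = σ ^ α * E t - m₂ * I t)
    (hR₀_le : R₀ ≤ 1)
    (V₀ : ℝ → ℝ)
    (hV₀ : ∀ t, V₀ t =
      (∫ x in S₀..S t, (F₁ x 0 - F₁ S₀ 0) / F₁ x 0) + E t + (m₁ / σ ^ α) * I t) :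
    ∀ t > (0 : ℝ), caputoDeriv α 0 V₀ t ≤ 0 :=
  seir_dfe_lyapunov_nonpos_general α Λ d σ γ hα hα1 hΛ hd hσ hγ m₁ m₂ S₀ hm₁ hm₂ hS₀ F₁ hF₁_cont
    hF₁_diff hF₁_zero_pos hF₁_S hF₁_I R₀ hR₀ S E I hS_pos hI_pos hS_smooth hE_smooth hI_smooth heqS
    heqE heqI hR₀_le V₀ hV₀
end
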